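/- (Multi-episode equivalence of DPT and posterior sampling; the online deployment version of Theorem 1.) Fix K, H ≥ 1, a test task τ_c ∈ T, an initial state distribution ρ ∈ PMF(S), and an initial dataset D_{(0)}. An episode is a tuple e = (s_1, a_1, r_1, …, s_H, a_H, r_H, s_{H+1}) ∈ (S × A × R)^H × S, contributing the transition tuples (s_h, a_h, s_{h+1}, r_h) for h = 1,…,H; D_{(k)} denotes D_{(0)} concatenated with the transition tuples of episodes e_1,…,e_k. At episode k, the posterior-sampling episode probability is p^ps_k(e) = (Σ_τ w(τ | D_{(k−1)}) ∏_{h=1}^H π*_τ(a_h | s_h)) · ρ(s_1) · ∏_{h=1}^H P_{τ_c}(s_{h+1} | s_h, a_h) · R_{τ_c}(r_h | s_h, a_h), and the DPT episode probability is p^M_k(e) = ρ(s_1) · ∏_{h=1}^H M(a_h | s_h, D_{(k−1)}, ξ_{h−1}) · P_{τ_c}(s_{h+1} | s_h, a_h) · R_{τ_c}(r_h | s_h, a_h), where ξ_{h−1} = (s_1, a_1, …, s_{h−1}, a_{h−1}). Then, adopting the convention x/0 = 0 in the definitions of w and M, for every sequence of episodes (e_1,…,e_K) and every k ∈ {1,…,K},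 p^ps_k(e_k) = p^M_k(e_k); consequently the joint distributions of the K episodes generated by the two processes coincide: ∏_{k=1}^K p^ps_k(e_k) = ∏_{k=1}^K p^M_k(e_k). -/

import Mathlib

open scoped BigOperators

/-- An in-context dataset entry `(s, a, s', r)`. -/
abbrev Entry (S A Rw : Type*) := S × A × S × Rw

variable {T S A Rw : Type*}

/-- Environment likelihood `L_τ(D) = ∏ᵢ P_τ(s'ᵢ | sᵢ, aᵢ) · R_τ(rᵢ | sᵢ, aᵢ)`. -/
noncomputable def envLik (Pk : T → S → A → PMF S) (Rk : T → S → A → PMF Rw)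
    (τ : T) (D : List (Entry S A Rw)) : ℝ :=
  (D.map fun e => (Pk τ e.1 e.2.1 e.2.2.1).toReal * (Rk τ e.1 e.2.1 e.2.2.2).toReal).prod

/-- Posterior-sampling posterior `w(τ | D)` (with the convention `x / 0 = 0`). -/
noncomputable def psPost [Fintype T] (Pk : T → S → A → PMF S) (Rk : T → S → A → PMF Rw)
    (prior : PMF T) (D : List (Entry S A Rw)) (τ : T) : ℝ :=
  (prior τ).toReal * envLik Pk Rk τ D /
    ∑ τ' : T, (prior τ').toReal * envLik Pk Rk τ' D

/-- Prefix weight `W_h(τ) = ∏ᵢ π*_τ(aᵢ | sᵢ)` of a history `ξ_h` (equal to `1` if `h = 0`). -/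
noncomputable def histW (πs : T → S → PMF A) (τ : T) (ξ : List (S × A)) : ℝ :=
  (ξ.map fun p => (πs τ p.1 p.2).toReal).prod

/-- DPT conditional action distribution
`M(a | s, D, ξ) = (Σ_τ w(τ|D) W(τ) π*_τ(a|s)) / (Σ_τ w(τ|D) W(τ))` (with `x / 0 = 0`). -/
noncomputable def dptM [Fintype T] (Pk : T → S → A → PMF S) (Rk : T → S → A → PMF Rw)
    (πs : T → S → PMF A) (prior : PMF T)
    (D : List (Entry S A Rw)) (ξ : List (S × A)) (s : S) (a : A) : ℝ :=
  (∑ τ : T, psPost Pk Rk prior D τ * histW πs τ ξ * (πs τ s a).toReal) /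
    (∑ τ : T, psPost Pk Rk prior D τ * histW πs τ ξ)


/-- The transition tuples `(s_h, a_h, s_{h+1}, r_h)`, `h = 1, …, H`, contributed by an
episode `(s_1, a_1, r_1, …, s_H, a_H, r_H, s_{H+1})`, given as a list of triples
`(s_h, a_h, r_h)` together with the final state `s_{H+1}`. -/
def epEntries : List (S × A × Rw) → S → List (Entry S A Rw)
  | [], _ => []
  | [(s, a, r)], sf => [(s, a, sf, r)]
  | (s, a, r) :: p :: rest, sf => (s, a, p.1, r) :: epEntries (p :: rest) sf

/-- The state-action pairs `(s_h, a_h)` of an episode. -/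
def epPairs (l : List (S × A × Rw)) : List (S × A) :=
  l.map fun t => (t.1, t.2.1)

/-- `ρ(s₁)` for an episode. -/
noncomputable def epInit (ρ : PMF S) : List (S × A × Rw) → S → ℝ
  | [], sf => (ρ sf).toReal
  | t :: _, _ => (ρ t.1).toReal

/-- Posterior-sampling episode probability at dataset `D`:
`p^ps(e) = (Σ_τ w(τ|D) ∏_h π*_τ(a_h|s_h)) · ρ(s₁)
  · ∏_h P_{τc}(s_{h+1}|s_h,a_h) · R_{τc}(r_h|s_h,a_h)`. -/
noncomputable def epPs [Fintype T] (Pk : T → S → A → PMF S) (Rk : T → S → A → PMF Rw)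
    (πs : T → S → PMF A) (prior : PMF T) (τc : T) (ρ : PMF S)
    (D : List (Entry S A Rw)) (e : List (S × A × Rw) × S) : ℝ :=
  (∑ τ : T, psPost Pk Rk prior D τ * histW πs τ (epPairs e.1)) *
    epInit ρ e.1 e.2 * envLik Pk Rk τc (epEntries e.1 e.2)

/-- DPT episode probability at dataset `D`:
`p^M(e) = ρ(s₁) · ∏_h M(a_h|s_h, D, ξ_{h-1}) · P_{τc}(s_{h+1}|s_h,a_h) · R_{τc}(r_h|s_h,a_h)`. -/
noncomputable def epM [Fintype T] (Pk : T → S → A → PMF S) (Rk : T → S → A → PMF Rw)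
    (πs : T → S → PMF A) (prior : PMF T) (τc : T) (ρ : PMF S)
    (D : List (Entry S A Rw)) (e : List (S × A × Rw) × S) : ℝ :=
  epInit ρ e.1 e.2 *
    (∏ i : Fin (epPairs e.1).length,
      dptM Pk Rk πs prior D ((epPairs e.1).take i)
        ((epPairs e.1).get i).1 ((epPairs e.1).get i).2) *
    envLik Pk Rk τc (epEntries e.1 e.2)

/-- The dataset `D_{(k)}`: the initial dataset `D₀` concatenated with the transition tuples
of the first `k` episodes `e_1, …, e_k`. -/
def datasetUpTo {K : ℕ} (D0 : List (Entry S A Rw))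
    (es : Fin K → List (S × A × Rw) × S) (k : ℕ) : List (Entry S A Rw) :=
  D0 ++ ((List.ofFn fun i : Fin K => epEntries (es i).1 (es i).2).take k).flatten

/-!
Write `w` for the posterior at the current dataset. The posterior-sampling probability of the
actions of an episode is the mixture `Σ_τ w(τ) W_H(τ)`. Appending `(s, a)` to a history `ξ`
multiplies `Σ_τ w(τ) W(ξ)` by exactly `M(a | s, D, ξ)`, this being Bayes' rule for the posterior
over tasks given `ξ`; hence the mixture telescopes into `(Σ_τ w(τ)) ∏_h M(a_h | s_h, D, ξ_{h-1})`.
As `Σ_τ w(τ) = 1` unless `w` vanishes identically, the two episode probabilities coincide, and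
with them their products over the episodes.
-/

lemma List.prod_take_get_append_singleton {α M : Type*} [CommMonoid M] (l : List α) (p : α)
    (g : List α → α → M) :
    ∏ i : Fin (l ++ [p]).length, g ((l ++ [p]).take i) ((l ++ [p]).get i) =
      (∏ i : Fin l.length, g (l.take i) (l.get i)) * g l p := by
  have hlen : l.length + 1 = (l ++ [p]).length := by simp
  rw [← Fin.prod_congr' _ hlen, Fin.prod_univ_castSucc]
  simp [List.take_append_of_le_length, List.getElem_append_left]

lemma envLik_nonneg (Pk : T → S → A → PMF S) (Rk : T → S → A → PMF Rw) (τ : T)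
    (D : List (Entry S A Rw)) : 0 ≤ envLik Pk Rk τ D :=
  List.prod_nonneg fun _ hx => by
    obtain ⟨_, _, rfl⟩ := List.mem_map.mp hx
    positivity

lemma histW_nonneg (πs : T → S → PMF A) (τ : T) (ξ : List (S × A)) : 0 ≤ histW πs τ ξ :=
  List.prod_nonneg fun _ hx => by
    obtain ⟨_, _, rfl⟩ := List.mem_map.mp hx
    positivity

lemma histW_append_singleton (πs : T → S → PMF A) (τ : T) (ξ : List (S × A)) (p : S × A) :
    histW πs τ (ξ ++ [p]) = histW πs τ ξ * (πs τ p.1 p.2).toReal := by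
  simp [histW]

section Posterior

variable [Fintype T] (Pk : T → S → A → PMF S) (Rk : T → S → A → PMF Rw)
  (prior : PMF T) (D : List (Entry S A Rw))

lemma psPost_nonneg (τ : T) : 0 ≤ psPost Pk Rk prior D τ :=
  div_nonneg (mul_nonneg ENNReal.toReal_nonneg (envLik_nonneg ..))
    (Finset.sum_nonneg fun _ _ => mul_nonneg ENNReal.toReal_nonneg (envLik_nonneg ..))

lemma sum_psPost_eq_one_or_eq_zero :
    ∑ τ, psPost Pk Rk prior D τ = 1 ∨ ∀ τ, psPost Pk Rk prior D τ = 0 := by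
  by_cases hZ : ∑ τ, (prior τ).toReal * envLik Pk Rk τ D = 0
  · exact Or.inr fun τ => by rw [psPost, hZ, div_zero]
  · exact Or.inl <| by simp only [psPost]; rw [← Finset.sum_div, div_self hZ]

variable (πs : T → S → PMF A)

lemma sum_psPost_mul_histW_append_singleton (ξ : List (S × A)) (p : S × A) :
    ∑ τ, psPost Pk Rk prior D τ * histW πs τ (ξ ++ [p]) =
      (∑ τ, psPost Pk Rk prior D τ * histW πs τ ξ) * dptM Pk Rk πs prior D ξ p.1 p.2 := by
  have hnum : ∑ τ, psPost Pk Rk prior D τ * histW πs τ (ξ ++ [p]) =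
      ∑ τ, psPost Pk Rk prior D τ * histW πs τ ξ * (πs τ p.1 p.2).toReal := by
    simp only [histW_append_singleton, mul_assoc]
  rw [hnum, dptM]
  by_cases hZ : ∑ τ, psPost Pk Rk prior D τ * histW πs τ ξ = 0
  · have hterm := (Finset.sum_eq_zero_iff_of_nonneg fun τ _ =>
      mul_nonneg (psPost_nonneg Pk Rk prior D τ) (histW_nonneg πs τ ξ)).mp hZ
    rw [hZ, zero_mul]
    exact Finset.sum_eq_zero fun τ hτ => by rw [hterm τ hτ, zero_mul]
  · rw [mul_div_cancel₀ _ hZ]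

lemma sum_psPost_mul_histW_eq_prod_dptM (ξ : List (S × A)) :
    ∑ τ, psPost Pk Rk prior D τ * histW πs τ ξ =
      (∑ τ, psPost Pk Rk prior D τ) *
        ∏ i : Fin ξ.length, dptM Pk Rk πs prior D (ξ.take i) (ξ.get i).1 (ξ.get i).2 := by
  induction ξ using List.reverseRecOn with
  | nil => simp [histW]
  | append_singleton ξ p ih =>
    rw [List.prod_take_get_append_singleton ξ p fun ξ q => dptM Pk Rk πs prior D ξ q.1 q.2,
      sum_psPost_mul_histW_append_singleton, ih, mul_assoc]

end Posterior

lemma epPs_eq_epM [Fintype T] (Pk : T → S → A → PMF S) (Rk : T → S → A → PMF Rw)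
    (πs : T → S → PMF A) (prior : PMF T) (τc : T) (ρ : PMF S) (D : List (Entry S A Rw))
    (e : List (S × A × Rw) × S) (he : e.1 ≠ []) :
    epPs Pk Rk πs prior τc ρ D e = epM Pk Rk πs prior τc ρ D e := by
  rw [epPs, epM, sum_psPost_mul_histW_eq_prod_dptM]
  rcases sum_psPost_eq_one_or_eq_zero Pk Rk prior D with hone | hzero
  · rw [hone]
    ring
  · -- A vanishing posterior makes every `M` equal to `0 / 0 = 0`, so both sides are `0`
    -- as soon as the episode has a step.
    have hpos : 0 < (epPairs e.1).length := by simpa [epPairs, List.length_pos_iff] using he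
    rw [Finset.prod_eq_zero (Finset.mem_univ ⟨0, hpos⟩) (by simp [dptM, hzero])]
    ring

theorem dpt_ps_multi_episode_equivalence_general
    [Fintype T]
    (Pk : T → S → A → PMF S) (Rk : T → S → A → PMF Rw) (πs : T → S → PMF A)
    (prior : PMF T) (τc : T) (ρ : PMF S)
    (K H : ℕ) (hH : 1 ≤ H)
    (D0 : List (Entry S A Rw))
    (es : Fin K → List (S × A × Rw) × S) (hlen : ∀ k : Fin K, (es k).1.length = H) :
    (∀ k : Fin K,
        epPs Pk Rk πs prior τc ρ (datasetUpTo D0 es k) (es k) =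
          epM Pk Rk πs prior τc ρ (datasetUpTo D0 es k) (es k)) ∧
      (∏ k : Fin K, epPs Pk Rk πs prior τc ρ (datasetUpTo D0 es k) (es k)) =
        (∏ k : Fin K, epM Pk Rk πs prior τc ρ (datasetUpTo D0 es k) (es k)) := by
  have hepisode : ∀ k : Fin K, epPs Pk Rk πs prior τc ρ (datasetUpTo D0 es k) (es k) =
      epM Pk Rk πs prior τc ρ (datasetUpTo D0 es k) (es k) := fun k =>
    epPs_eq_epM Pk Rk πs prior τc ρ _ (es k) <|
      List.ne_nil_of_length_pos (by rw [hlen k]; exact hH)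
  exact ⟨hepisode, Finset.prod_congr rfl fun k _ => hepisode k⟩

/-- **Multi-episode equivalence of DPT and posterior sampling** (online deployment version of
Theorem 1). With the convention `x / 0 = 0` in the definitions of `w` and `M`: for every
sequence of episodes `(e_1, …, e_K)` of horizon `H` and every `k ∈ {1, …, K}`,
`p^ps_k(e_k) = p^M_k(e_k)`, where episode `k` is evaluated at the dataset `D_{(k-1)}`;
consequently the joint distributions of the `K` episodes generated by the two processes
coincide: `∏_k p^ps_k(e_k) = ∏_k p^M_k(e_k)`. -/
theorem dpt_ps_multi_episode_equivalence
    [Fintype T] [Nonempty T] [Fintype S] [Nonempty S] [Fintype A] [Nonempty A]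
    [Fintype Rw] [Nonempty Rw]
    (Pk : T → S → A → PMF S) (Rk : T → S → A → PMF Rw) (πs : T → S → PMF A)
    (prior : PMF T) (τc : T) (ρ : PMF S)
    (K H : ℕ) (hK : 1 ≤ K) (hH : 1 ≤ H)
    (D0 : List (Entry S A Rw))
    (es : Fin K → List (S × A × Rw) × S) (hlen : ∀ k : Fin K, (es k).1.length = H) :
    (∀ k : Fin K,
        epPs Pk Rk πs prior τc ρ (datasetUpTo D0 es k) (es k) =
          epM Pk Rk πs prior τc ρ (datasetUpTo D0 es k) (es k)) ∧
      (∏ k : Fin K, epPs Pk Rk πs prior τc ρ (datasetUpTo D0 es k) (es k)) =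
        (∏ k : Fin K, epM Pk Rk πs prior τc ρ (datasetUpTo D0 es k) (es k)) :=
  dpt_ps_multi_episode_equivalence_general Pk Rk πs prior τc ρ K H hH D0 es hlen
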